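/- arXiv:2301.10534 — 3 statements merged into one kernel-verified Lean document; each statement's English description precedes it below -/
import Mathlib

section
/- Let G be a nilpotent group of class at most 3. Then for all x, y in G and every natural number n, [x^n, y] = [x,y]^n * [[x,y],x]^(n choose 2) * [[[x,y],x],x]^(n choose 3). -/
/-!
In class at most 3 the commutator `d = [[x,y],x]` is central, so in particular
`[[[x,y],x],x] = 1`. Conjugating `[x,y]` by `x ^ m` multiplies it by `d ^ m`, and
`[x ^ (n+1), y] = x⁻ⁿ [x,y] xⁿ · [x ^ n, y]`, so by induction the exponent of `d` in
`[x ^ n, y]` is `0 + 1 + ⋯ + (n - 1) = n.choose 2`.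
-/

/-- The commutator `[a,b] = a⁻¹ * b⁻¹ * a * b`. -/
def cmtr {G : Type*} [Group G] (a b : G) : G := a⁻¹ * b⁻¹ * a * b

section

variable {G : Type*} [Group G]

lemma cmtr_eq_one_iff {a b : G} : cmtr a b = 1 ↔ Commute a b := by
  rw [Commute, SemiconjBy, cmtr, mul_assoc, mul_assoc, inv_mul_eq_one, eq_inv_mul_iff_mul_eq,
    eq_comm]

lemma inv_mul_mul_eq_mul_cmtr (a b : G) : b⁻¹ * a * b = a * cmtr a b := by
  unfold cmtr; group

lemma cmtr_mul_left (a b y : G) : cmtr (a * b) y = b⁻¹ * cmtr a y * b * cmtr b y := by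
  unfold cmtr; group

lemma inv_pow_mul_mul_pow_eq_mul_cmtr_pow {a x : G} (h : Commute (cmtr a x) x) (m : ℕ) :
    (x ^ m)⁻¹ * a * x ^ m = a * cmtr a x ^ m := by
  induction m with
  | zero => simp
  | succ m ih =>
    calc (x ^ (m + 1))⁻¹ * a * x ^ (m + 1)
        = x⁻¹ * ((x ^ m)⁻¹ * a * x ^ m) * x := by group
      _ = x⁻¹ * a * x * cmtr a x ^ m := by
          rw [ih, mul_assoc x⁻¹, mul_assoc a, (h.pow_left m).eq]; group
      _ = a * cmtr a x ^ (m + 1) := by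
          rw [inv_mul_mul_eq_mul_cmtr, pow_succ', mul_assoc]

theorem cmtr_pow_left_eq {x y : G} (hx : Commute (cmtr (cmtr x y) x) x)
    (hxy : Commute (cmtr (cmtr x y) x) (cmtr x y)) (n : ℕ) :
    cmtr (x ^ n) y = cmtr x y ^ n * cmtr (cmtr x y) x ^ n.choose 2 := by
  induction n with
  | zero => simp [cmtr]
  | succ n ih =>
    have hchoose : (n + 1).choose 2 = n + n.choose 2 := by
      rw [Nat.choose_succ_succ, Nat.choose_one_right]
    rw [pow_succ', cmtr_mul_left, ih, inv_pow_mul_mul_pow_eq_mul_cmtr_pow hx, hchoose, pow_add,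
      pow_succ', mul_assoc (cmtr x y), ← mul_assoc (cmtr (cmtr x y) x ^ n),
      (hxy.pow_pow n n).eq]
    group

end

/-- In a nilpotent group of class at most 3 (all 4-fold iterated commutators
trivial), for all `x, y` and every natural number `n`,
`[x^n, y] = [x,y]^n * [[x,y],x]^(n choose 2) * [[[x,y],x],x]^(n choose 3)`. -/
theorem pow_commutator_class_le_three {G : Type*} [Group G]
    (hG : ∀ a b c d : G, cmtr (cmtr (cmtr a b) c) d = 1)
    (x y : G) (n : ℕ) :
    cmtr (x ^ n) y =
      (cmtr x y) ^ n * (cmtr (cmtr x y) x) ^ n.choose 2 *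
        (cmtr (cmtr (cmtr x y) x) x) ^ n.choose 3 := by
  have hcentral : ∀ z, Commute (cmtr (cmtr x y) x) z := fun z => cmtr_eq_one_iff.1 (hG x y x z)
  rw [cmtr_pow_left_eq (hcentral x) (hcentral _) n, cmtr_eq_one_iff.2 (hcentral x), one_pow,
    mul_one]
end

section
/- Let G be a group and x, y elements of G that commute, with x of finite order m and y of finite order n. Then in any group L, for any exterior pairing Φ : G × G → L (i.e. Φ(ab,c) = Φ(aᵇ,cᵇ)Φ(b,c), Φ(a,bc) = Φ(a,c)Φ(aᶜ,bᶜ), and Φ(a,a) = 1 for all a,b,c in G), the order of Φ(x,y) divides gcd(m,n). -/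
/-!
Conjugation by a power of `x` fixes both `x` and `y`, so the first identity gives
`Φ(x^(k+1), y) = Φ(x, y) Φ(x^k, y)`, and `Φ(x^k, y) = Φ(x, y)^k`; symmetrically
`Φ(x, y^k) = Φ(x, y)^k` by the second identity. Taking `k = m` and `k = n`, and using
`Φ(1, y) = Φ(x, 1) = 1` (from either identity with trivial arguments), `Φ(x, y)^m = Φ(x, y)^n = 1`.
-/

section ExteriorPairing

variable {G L : Type*} [Group G] [Group L] {Φ : G → G → L}

theorem exteriorPairing_one_left
    (h1 : ∀ a b c : G, Φ (a * b) c = Φ (b⁻¹ * a * b) (b⁻¹ * c * b) * Φ b c) (c : G) :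
    Φ 1 c = 1 := by
  simpa using h1 1 1 c

theorem exteriorPairing_one_right
    (h2 : ∀ a b c : G, Φ a (b * c) = Φ a c * Φ (c⁻¹ * a * c) (c⁻¹ * b * c)) (a : G) :
    Φ a 1 = 1 := by
  simpa using h2 a 1 1

theorem exteriorPairing_pow_left
    (h1 : ∀ a b c : G, Φ (a * b) c = Φ (b⁻¹ * a * b) (b⁻¹ * c * b) * Φ b c)
    {x y : G} (hxy : Commute x y) (k : ℕ) : Φ (x ^ k) y = Φ x y ^ k := by
  induction k with
  | zero => simpa using exteriorPairing_one_left h1 y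
  | succ k ih =>
    rw [pow_succ', h1, ((Commute.refl x).pow_left k).inv_mul_cancel,
      (hxy.pow_left k).inv_mul_cancel, ih, pow_succ']

theorem exteriorPairing_pow_right
    (h2 : ∀ a b c : G, Φ a (b * c) = Φ a c * Φ (c⁻¹ * a * c) (c⁻¹ * b * c))
    {x y : G} (hxy : Commute x y) (k : ℕ) : Φ x (y ^ k) = Φ x y ^ k := by
  induction k with
  | zero => simpa using exteriorPairing_one_right h2 x
  | succ k ih =>
    rw [pow_succ', h2, (hxy.symm.pow_left k).inv_mul_cancel,
      ((Commute.refl y).pow_left k).inv_mul_cancel, ih, pow_succ]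

theorem orderOf_exteriorPairing_dvd_orderOf_left
    (h1 : ∀ a b c : G, Φ (a * b) c = Φ (b⁻¹ * a * b) (b⁻¹ * c * b) * Φ b c)
    {x y : G} (hxy : Commute x y) : orderOf (Φ x y) ∣ orderOf x :=
  orderOf_dvd_of_pow_eq_one <| by
    rw [← exteriorPairing_pow_left h1 hxy, pow_orderOf_eq_one, exteriorPairing_one_left h1]

theorem orderOf_exteriorPairing_dvd_orderOf_right
    (h2 : ∀ a b c : G, Φ a (b * c) = Φ a c * Φ (c⁻¹ * a * c) (c⁻¹ * b * c))
    {x y : G} (hxy : Commute x y) : orderOf (Φ x y) ∣ orderOf y :=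
  orderOf_dvd_of_pow_eq_one <| by
    rw [← exteriorPairing_pow_right h2 hxy, pow_orderOf_eq_one, exteriorPairing_one_right h2]

end ExteriorPairing

theorem orderOf_exterior_pairing_dvd_gcd_general {G L : Type*} [Group G] [Group L]
    (Φ : G → G → L)
    (h1 : ∀ a b c : G, Φ (a * b) c = Φ (b⁻¹ * a * b) (b⁻¹ * c * b) * Φ b c)
    (h2 : ∀ a b c : G, Φ a (b * c) = Φ a c * Φ (c⁻¹ * a * c) (c⁻¹ * b * c))
    (x y : G) (hxy : x * y = y * x) (m n : ℕ)
    (hx : orderOf x = m) (hy : orderOf y = n) :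
    orderOf (Φ x y) ∣ Nat.gcd m n := by
  subst hx hy
  exact Nat.dvd_gcd (orderOf_exteriorPairing_dvd_orderOf_left h1 hxy)
    (orderOf_exteriorPairing_dvd_orderOf_right h2 hxy)

/-- If `x` and `y` are commuting elements of a group `G` of finite orders `m`
and `n` respectively, then for any exterior pairing `Φ : G × G → L`, the order
of `Φ(x,y)` divides `gcd(m,n)`. -/
theorem orderOf_exterior_pairing_dvd_gcd {G L : Type*} [Group G] [Group L]
    (Φ : G → G → L)
    (h1 : ∀ a b c : G, Φ (a * b) c = Φ (b⁻¹ * a * b) (b⁻¹ * c * b) * Φ b c)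
    (h2 : ∀ a b c : G, Φ a (b * c) = Φ a c * Φ (c⁻¹ * a * c) (c⁻¹ * b * c))
    (h3 : ∀ a : G, Φ a a = 1)
    (x y : G) (hxy : x * y = y * x) (m n : ℕ) (hm : 0 < m) (hn : 0 < n)
    (hx : orderOf x = m) (hy : orderOf y = n) :
    orderOf (Φ x y) ∣ Nat.gcd m n :=
  orderOf_exterior_pairing_dvd_gcd_general Φ h1 h2 x y hxy m n hx hy
end

section
/- Let G be a nilpotent group of class at most 6. Then for all x, y in G and every positive integer n, [xⁿ,y] = [x,y]ⁿ · [x,y,x]^C(n,2) · [x,y,x,x]^C(n,3) · [x,y,x,x,x]^C(n,4) · [x,y,x,[x,y]]^a(n) · [x,y,x,x,x,x]^C(n,5) · [x,y,x,[x,y],x]^(C(n,3)+2·C(n,4)) · [x,y,x,x,[x,y]]^(C(n,3)+C(n,4)), where a(n) = n(n−1)(2n−1)/6, left-normed commutator notation [u,v,w] = [[u,v],w] is used, and C(n,k) denotes the binomial coefficient. -/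
section

variable {G : Type*} [Group G]

theorem cmtr_inv (a b : G) : (cmtr a b)⁻¹ = cmtr b a := by
  simp only [cmtr]; group

theorem mul_eq_mul_mul_cmtr (a b : G) : a * b = b * a * cmtr a b := by
  simp only [cmtr]; group

theorem commute_iff_cmtr_eq_one {a b : G} : Commute a b ↔ cmtr a b = 1 := by
  rw [Commute, SemiconjBy, mul_eq_mul_mul_cmtr a b, mul_eq_left]

theorem inv_mul_mul_eq_mul_cmtr_s12 (g x : G) : x⁻¹ * g * x = g * cmtr g x := by
  simp only [cmtr]; group

theorem cmtr_pow_succ_left (x y : G) (n : ℕ) :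
    cmtr (x ^ (n + 1)) y = x⁻¹ * cmtr (x ^ n) y * x * cmtr x y := by
  simp only [cmtr, pow_succ]; group

theorem cmtr_hallWitt (x y z : G) :
    y⁻¹ * cmtr (cmtr x y⁻¹) z * y * (z⁻¹ * cmtr (cmtr y z⁻¹) x * z) *
      (x⁻¹ * cmtr (cmtr z x⁻¹) y * x) = 1 := by
  simp only [cmtr]; group

theorem mul_pow_mul_pow {M : Type*} [Monoid M] (t a : M) (i j : ℕ) :
    t * a ^ i * a ^ j = t * a ^ (i + j) := by
  rw [mul_assoc, ← pow_add]

theorem pow_mul_eq_mul_pow_mul_cmtr_pow {a b : G} (h : Commute b (cmtr b a)) (k : ℕ) :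
    b ^ k * a = a * b ^ k * cmtr b a ^ k := by
  induction k with
  | zero => simp
  | succ k ih =>
    calc b ^ (k + 1) * a = b ^ k * a * b * cmtr b a := by
          rw [pow_succ, mul_assoc, mul_eq_mul_mul_cmtr b a]; group
      _ = a * b ^ (k + 1) * cmtr b a ^ (k + 1) := by
          rw [ih, (h.pow_right k).symm.right_comm, pow_succ, pow_succ]; group

theorem mul_pow_eq_pow_mul_pow_mul_cmtr_pow {a b : G} (ha : Commute a (cmtr b a))
    (hb : Commute b (cmtr b a)) (k : ℕ) :
    (a * b) ^ k = a ^ k * b ^ k * cmtr b a ^ k.choose 2 := by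
  induction k with
  | zero => simp
  | succ k ih =>
    calc (a * b) ^ (k + 1) = a ^ k * (b ^ k * a) * (cmtr b a ^ k.choose 2 * b) := by
          rw [pow_succ, ih]; simp only [mul_assoc]; rw [(ha.pow_right _).symm.left_comm]
      _ = a ^ (k + 1) * b ^ (k + 1) * cmtr b a ^ (k + 1).choose 2 := by
          rw [pow_mul_eq_mul_pow_mul_cmtr_pow hb, pow_succ a, pow_succ b,
            Nat.choose_succ_succ' k 1, Nat.choose_one_right, pow_add]
          simp only [mul_assoc]
          rw [← (hb.pow_right _).eq, (hb.pow_right _).symm.left_comm]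

theorem mem_upperCentralSeries_succ_iff_cmtr {n : ℕ} {g : G} :
    g ∈ Subgroup.upperCentralSeries G (n + 1) ↔
      ∀ h, cmtr g h ∈ Subgroup.upperCentralSeries G n := by
  rw [← inv_mem_iff, Subgroup.mem_upperCentralSeries_succ_iff]
  refine (Equiv.inv G).forall_congr fun h => ?_
  rw [Equiv.inv_apply, cmtr, inv_inv, commutatorElement_def, inv_inv]

theorem mem_upperCentralSeries_of_foldl_cmtr_eq_one {n : ℕ} {g : G}
    (hg : ∀ hs : List G, hs.length = n → hs.foldl cmtr g = 1) :
    g ∈ Subgroup.upperCentralSeries G n := by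
  induction n generalizing g with
  | zero => rw [Subgroup.upperCentralSeries_zero, Subgroup.mem_bot]; exact hg [] rfl
  | succ n ih =>
    exact mem_upperCentralSeries_succ_iff_cmtr.2 fun h =>
      ih fun hs hlen => hg (h :: hs) (by simp [hlen])

/-- Weight relative to the upper central series: every element of `γₖ G`
(`lowerCentralSeries G (k - 1)` in Mathlib's indexing) has weight `k`. -/
def HasWeight (k : ℕ) (h : G) : Prop :=
  ∀ n, ∀ g ∈ Subgroup.upperCentralSeries G (n + k), cmtr g h ∈ Subgroup.upperCentralSeries G n

theorem hasWeight_one (h : G) : HasWeight 1 h :=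
  fun _ _ hg => mem_upperCentralSeries_succ_iff_cmtr.1 hg h

theorem HasWeight.inv {k : ℕ} {h : G} (hh : HasWeight k h) : HasWeight k h⁻¹ := by
  intro n g hg
  have : cmtr g h⁻¹ = h * (cmtr g h)⁻¹ * h⁻¹ := by simp only [cmtr]; group
  rw [this]
  exact Subgroup.Normal.conj_mem inferInstance _ (inv_mem (hh n g hg)) h

theorem hasWeight_cmtr {j k : ℕ} {a b : G} (ha : HasWeight j a) (hb : HasWeight k b) :
    HasWeight (j + k) (cmtr a b) := by
  intro n g hg
  have hT : g⁻¹ * cmtr (cmtr b⁻¹ g⁻¹) a * g ∈ Subgroup.upperCentralSeries G n := by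
    have := hb.inv (n + j) g⁻¹ (inv_mem (by rwa [← add_assoc] at hg))
    rw [← cmtr_inv] at this
    simpa [mul_assoc] using Subgroup.Normal.conj_mem inferInstance _ (ha n _ (inv_mem this)) g⁻¹
  have hR : a⁻¹ * cmtr (cmtr g a⁻¹) b⁻¹ * a ∈ Subgroup.upperCentralSeries G n := by
    have := ha.inv (n + k) g (by rwa [add_comm j k, ← add_assoc] at hg)
    simpa [mul_assoc] using Subgroup.Normal.conj_mem inferInstance _ (hb.inv n _ this) a⁻¹
  have hP : b * cmtr (cmtr a b) g * b⁻¹ ∈ Subgroup.upperCentralSeries G n := by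
    have hW := cmtr_hallWitt a b⁻¹ g
    rw [inv_inv] at hW
    exact (mul_mem_cancel_right hT).1 <| (mul_mem_cancel_right hR).1 <| hW ▸ one_mem _
  rw [← cmtr_inv, inv_mem_iff]
  simpa [mul_assoc] using Subgroup.Normal.conj_mem inferInstance _ hP b⁻¹

theorem HasWeight.mem_upperCentralSeries {m k : ℕ} {h : G}
    (hG : ∀ g : G, g ∈ Subgroup.upperCentralSeries G (m + k)) (hh : HasWeight k h) :
    h ∈ Subgroup.upperCentralSeries G (m + 1) :=
  mem_upperCentralSeries_succ_iff_cmtr.2 fun g => by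
    rw [← cmtr_inv]; exact inv_mem (hh m g (hG g))

theorem HasWeight.commute {k : ℕ} {g h : G} (hh : HasWeight k h)
    (hg : g ∈ Subgroup.upperCentralSeries G k) : Commute g h := by
  rw [commute_iff_cmtr_eq_one, ← Subgroup.mem_bot, ← Subgroup.upperCentralSeries_zero]
  exact hh 0 g (by rwa [zero_add])

theorem commute_of_hasWeight {c j k : ℕ} {a b : G}
    (hG : ∀ g : G, g ∈ Subgroup.upperCentralSeries G c) (ha : HasWeight j a)
    (hb : HasWeight (k + 1) b) (hjk : c ≤ j + k) : Commute a b :=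
  hb.commute <| ha.mem_upperCentralSeries fun g =>
    Subgroup.upperCentralSeries_mono G (by omega) (hG g)

def collectedWord (x c : G) (n A B C D E F H : ℕ) : G :=
  c ^ n * cmtr c x ^ A * cmtr (cmtr c x) x ^ B * cmtr (cmtr (cmtr c x) x) x ^ C *
    cmtr (cmtr c x) c ^ D * cmtr (cmtr (cmtr (cmtr c x) x) x) x ^ E *
    cmtr (cmtr (cmtr c x) c) x ^ F * cmtr (cmtr (cmtr c x) x) c ^ H

section Collection

variable (hG : ∀ g : G, g ∈ Subgroup.upperCentralSeries G 6) {c : G} (hc : HasWeight 2 c) (x : G)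
include hG hc

-- The subscript is the weight, given that `c` has weight 2 and `x` weight 1.
local notation "c₃" => cmtr c x
local notation "c₄" => cmtr c₃ x
local notation "c₅" => cmtr c₄ x
local notation "c₆" => cmtr c₅ x
local notation "d₅" => cmtr c₃ c
local notation "d₆" => cmtr d₅ x
local notation "e₆" => cmtr c₄ c

theorem inv_mul_collectedWord_mul (n A B C D E F H : ℕ) :
    x⁻¹ * collectedWord x c n A B C D E F H * x =
      collectedWord x c n (n + A) (A + B) (B + C) (n.choose 2 + D) (C + E) (D + F) H := by
  have w₃ : HasWeight 3 c₃ := hasWeight_cmtr hc (hasWeight_one x)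
  have w₄ : HasWeight 4 c₄ := hasWeight_cmtr w₃ (hasWeight_one x)
  have w₅ : HasWeight 5 c₅ := hasWeight_cmtr w₄ (hasWeight_one x)
  have wd₅ : HasWeight 5 d₅ := hasWeight_cmtr w₃ hc
  have comm : ∀ {a b : G} {j k : ℕ}, HasWeight j a → HasWeight (k + 1) b → 6 ≤ j + k →
      Commute a b := commute_of_hasWeight hG
  have central : ∀ {z : G}, HasWeight 6 z → ∀ g, Commute g z := fun hz g =>
    comm (hasWeight_one g) hz (by norm_num)
  have hc₆ := central (hasWeight_cmtr w₅ (hasWeight_one x))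
  have hd₆ := central (hasWeight_cmtr wd₅ (hasWeight_one x))
  have he₆ := central (hasWeight_cmtr w₄ hc)
  have pow_c_c₃ : (c * c₃) ^ n = c ^ n * c₃ ^ n * d₅ ^ n.choose 2 :=
    mul_pow_eq_pow_mul_pow_mul_cmtr_pow (comm hc wd₅ (by norm_num)) (comm w₃ wd₅ (by norm_num)) n
  have hconj : ∀ g, MulAut.conj x⁻¹ g = x⁻¹ * g * x := by simp
  unfold collectedWord
  rw [← hconj]
  simp only [map_mul, map_pow]
  simp only [hconj, inv_mul_mul_eq_mul_cmtr_s12, (hc₆ x).inv_mul_cancel, (hd₆ x).inv_mul_cancel,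
    (he₆ x).inv_mul_cancel]
  rw [pow_c_c₃, (comm w₃ w₄ (by norm_num)).mul_pow, (comm w₄ w₅ (by norm_num)).mul_pow,
    (hc₆ _).mul_pow, (hd₆ _).mul_pow]
  simp only [← mul_assoc, mul_pow_mul_pow,
    ((comm w₃ wd₅ (by norm_num)).symm.pow_pow _ _).right_comm,
    ((comm w₄ wd₅ (by norm_num)).symm.pow_pow _ _).right_comm,
    ((comm w₅ wd₅ (by norm_num)).symm.pow_pow _ _).right_comm,
    ((hc₆ d₅).symm.pow_pow _ _).right_comm, ((hd₆ c₆).symm.pow_pow _ _).right_comm]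

theorem collectedWord_mul (n A B C D E F H : ℕ) :
    collectedWord x c n A B C D E F H * c =
      collectedWord x c (n + 1) A B C (A + D) E F (B + H) := by
  have w₃ : HasWeight 3 c₃ := hasWeight_cmtr hc (hasWeight_one x)
  have w₄ : HasWeight 4 c₄ := hasWeight_cmtr w₃ (hasWeight_one x)
  have w₅ : HasWeight 5 c₅ := hasWeight_cmtr w₄ (hasWeight_one x)
  have wd₅ : HasWeight 5 d₅ := hasWeight_cmtr w₃ hc
  have comm : ∀ {a b : G} {j k : ℕ}, HasWeight j a → HasWeight (k + 1) b → 6 ≤ j + k →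
      Commute a b := commute_of_hasWeight hG
  have central : ∀ {z : G}, HasWeight 6 z → ∀ g, Commute g z := fun hz g =>
    comm (hasWeight_one g) hz (by norm_num)
  have hc₆ := central (hasWeight_cmtr w₅ (hasWeight_one x))
  have hd₆ := central (hasWeight_cmtr wd₅ (hasWeight_one x))
  have he₆ := central (hasWeight_cmtr w₄ hc)
  have move_c₃ : ∀ t k, t * c₃ ^ k * c = t * c * c₃ ^ k * d₅ ^ k := fun t k => by
    rw [mul_assoc, pow_mul_eq_mul_pow_mul_cmtr_pow (comm w₃ wd₅ (by norm_num)), ← mul_assoc,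
      ← mul_assoc]
  have move_c₄ : ∀ t k, t * c₄ ^ k * c = t * c * c₄ ^ k * e₆ ^ k := fun t k => by
    rw [mul_assoc, pow_mul_eq_mul_pow_mul_cmtr_pow (he₆ c₄), ← mul_assoc, ← mul_assoc]
  unfold collectedWord
  simp only [move_c₃, move_c₄, ((hc₆ c).pow_right _).symm.right_comm,
    ((hd₆ c).pow_right _).symm.right_comm, ((he₆ c).pow_right _).symm.right_comm,
    ((comm hc w₅ (by norm_num)).pow_right _).symm.right_comm,
    ((comm hc wd₅ (by norm_num)).pow_right _).symm.right_comm, ← pow_succ]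
  simp only [mul_pow_mul_pow, ((comm w₄ wd₅ (by norm_num)).symm.pow_pow _ _).right_comm,
    ((comm w₅ wd₅ (by norm_num)).symm.pow_pow _ _).right_comm,
    ((he₆ c₅).symm.pow_pow _ _).right_comm, ((he₆ d₅).symm.pow_pow _ _).right_comm,
    ((he₆ c₆).symm.pow_pow _ _).right_comm, ((he₆ d₆).symm.pow_pow _ _).right_comm]

end Collection

theorem mul_pred_mul_two_mul_pred_div_six (n : ℕ) :
    n * (n - 1) * (2 * n - 1) / 6 = n.choose 2 + 2 * n.choose 3 := by
  rcases n with _ | _ | n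
  · rfl
  · rfl
  · have h₂ := Nat.descFactorial_eq_factorial_mul_choose (n + 2) 2
    have h₃ := Nat.descFactorial_eq_factorial_mul_choose (n + 2) 3
    simp only [Nat.descFactorial, Nat.factorial] at h₂ h₃
    refine Nat.div_eq_of_eq_mul_left (by norm_num) ?_
    rw [show 2 * (n + 1 + 1) - 1 = 2 * n + 3 by omega]
    norm_num at h₂ h₃ ⊢
    linarith

theorem cmtr_pow_eq_collectedWord (hG : ∀ g : G, g ∈ Subgroup.upperCentralSeries G 6)
    (x y : G) (n : ℕ) :
    cmtr (x ^ n) y = collectedWord x (cmtr x y) n (n.choose 2) (n.choose 3) (n.choose 4)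
      (n.choose 2 + 2 * n.choose 3) (n.choose 5) (n.choose 3 + 2 * n.choose 4)
      (n.choose 3 + n.choose 4) := by
  have hc : HasWeight 2 (cmtr x y) := hasWeight_cmtr (hasWeight_one x) (hasWeight_one y)
  induction n with
  | zero => simp [collectedWord, cmtr]
  | succ n ih =>
    rw [cmtr_pow_succ_left, ih, inv_mul_collectedWord_mul hG hc, collectedWord_mul hG hc]
    simp only [Nat.choose_succ_succ', Nat.choose_one_right]
    ring_nf

end

theorem pow_commutator_class_le_six_general {G : Type*} [Group G]
    (hG : ∀ a₁ a₂ a₃ a₄ a₅ a₆ a₇ : G,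
      cmtr (cmtr (cmtr (cmtr (cmtr (cmtr a₁ a₂) a₃) a₄) a₅) a₆) a₇ = 1)
    (x y : G) (n : ℕ) :
    cmtr (x ^ n) y =
      (cmtr x y) ^ n *
      (cmtr (cmtr x y) x) ^ n.choose 2 *
      (cmtr (cmtr (cmtr x y) x) x) ^ n.choose 3 *
      (cmtr (cmtr (cmtr (cmtr x y) x) x) x) ^ n.choose 4 *
      (cmtr (cmtr (cmtr x y) x) (cmtr x y)) ^ (n * (n - 1) * (2 * n - 1) / 6) *
      (cmtr (cmtr (cmtr (cmtr (cmtr x y) x) x) x) x) ^ n.choose 5 *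
      (cmtr (cmtr (cmtr (cmtr x y) x) (cmtr x y)) x) ^ (n.choose 3 + 2 * n.choose 4) *
      (cmtr (cmtr (cmtr (cmtr x y) x) x) (cmtr x y)) ^ (n.choose 3 + n.choose 4) := by
  have hG₆ : ∀ g : G, g ∈ Subgroup.upperCentralSeries G 6 := fun g =>
    mem_upperCentralSeries_of_foldl_cmtr_eq_one fun
      | [a₂, a₃, a₄, a₅, a₆, a₇], _ => hG g a₂ a₃ a₄ a₅ a₆ a₇
  rw [mul_pred_mul_two_mul_pred_div_six]
  exact cmtr_pow_eq_collectedWord hG₆ x y n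

/-- Let `G` be nilpotent of class at most 6 (all 7-fold iterated commutators
trivial).  Then for all `x, y ∈ G` and every positive integer `n`,
`[xⁿ,y] = [x,y]ⁿ · [x,y,x]^C(n,2) · [x,y,x,x]^C(n,3) · [x,y,x,x,x]^C(n,4) ·
[x,y,x,[x,y]]^a(n) · [x,y,x,x,x,x]^C(n,5) · [x,y,x,[x,y],x]^(C(n,3)+2C(n,4)) ·
[x,y,x,x,[x,y]]^(C(n,3)+C(n,4))`, where `a(n) = n(n−1)(2n−1)/6` and
commutators are left-normed. -/
theorem pow_commutator_class_le_six {G : Type*} [Group G]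
    (hG : ∀ a₁ a₂ a₃ a₄ a₅ a₆ a₇ : G,
      cmtr (cmtr (cmtr (cmtr (cmtr (cmtr a₁ a₂) a₃) a₄) a₅) a₆) a₇ = 1)
    (x y : G) (n : ℕ) (hn : 0 < n) :
    cmtr (x ^ n) y =
      (cmtr x y) ^ n *
      (cmtr (cmtr x y) x) ^ n.choose 2 *
      (cmtr (cmtr (cmtr x y) x) x) ^ n.choose 3 *
      (cmtr (cmtr (cmtr (cmtr x y) x) x) x) ^ n.choose 4 *
      (cmtr (cmtr (cmtr x y) x) (cmtr x y)) ^ (n * (n - 1) * (2 * n - 1) / 6) *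
      (cmtr (cmtr (cmtr (cmtr (cmtr x y) x) x) x) x) ^ n.choose 5 *
      (cmtr (cmtr (cmtr (cmtr x y) x) (cmtr x y)) x) ^ (n.choose 3 + 2 * n.choose 4) *
      (cmtr (cmtr (cmtr (cmtr x y) x) x) (cmtr x y)) ^ (n.choose 3 + n.choose 4) :=
  pow_commutator_class_le_six_general hG x y n
end
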